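/- In the setting of linear identifiability, if p_{f,g} = p_{f',g'} pointwise, then the unembeddings satisfy g(y) = A^{-T} g'(y) + b for a fixed vector b ∈ ℝ^M independent of y, where A = L^{-T} L'^{T}. -/

import Mathlib

/-!
Dividing `p_{f,g}(y | x)` by `p_{f,g}(y₀ | x)` cancels the normalising constant, so equality of the
two models gives `f x ⬝ᵥ (g y - g y₀) = f' x ⬝ᵥ (g' y - g' y₀)`, and after subtracting the same
identity at `x₀`, `N (g y - g y₀) = N' (g' y - g' y₀)`, where the rows of `N`, `N'` are the displaced
embeddings `f (xs j) - f x₀`, `f' (xs j) - f' x₀`. Taking `y = ys k` gives `N L = N' L'`; as `N` and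
`L` are invertible, so is `L'`, and cancelling `N` yields `g y - g y₀ = L L'⁻¹ (g' y - g' y₀)` with
`L L'⁻¹ = A⁻ᵀ`.
-/

open Matrix

/-- The softmax conditional model `p_{f,g}(y|x)`. -/
noncomputable def softmax {X Y : Type*} [Fintype Y] {M : ℕ}
    (f : X → Fin M → ℝ) (g : Y → Fin M → ℝ) (x : X) (y : Y) : ℝ :=
  Real.exp (∑ i, f x i * g y i) / ∑ y' : Y, Real.exp (∑ i, f x i * g y' i)

section Softmax

variable {X Y : Type*} [Fintype Y] {M : ℕ}

theorem softmax_div_softmax (f : X → Fin M → ℝ) (g : Y → Fin M → ℝ) (x : X) (y y₀ : Y) :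
    softmax f g x y / softmax f g x y₀ = Real.exp (f x ⬝ᵥ (g y - g y₀)) := by
  have hZ : (0 : ℝ) < ∑ y', Real.exp (f x ⬝ᵥ g y') :=
    Finset.sum_pos (fun _ _ => Real.exp_pos _) ⟨y, Finset.mem_univ y⟩
  rw [dotProduct_sub, Real.exp_sub]
  exact div_div_div_cancel_right₀ hZ.ne' _ _

theorem dotProduct_sub_eq_of_softmax_eq {f f' : X → Fin M → ℝ} {g g' : Y → Fin M → ℝ}
    (heq : ∀ x y, softmax f g x y = softmax f' g' x y) (x : X) (y y₀ : Y) :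
    f x ⬝ᵥ (g y - g y₀) = f' x ⬝ᵥ (g' y - g' y₀) :=
  Real.exp_injective <| by rw [← softmax_div_softmax, ← softmax_div_softmax, heq, heq]

theorem sub_dotProduct_sub_eq_of_softmax_eq {f f' : X → Fin M → ℝ} {g g' : Y → Fin M → ℝ}
    (heq : ∀ x y, softmax f g x y = softmax f' g' x y) (x x₀ : X) (y y₀ : Y) :
    (f x - f x₀) ⬝ᵥ (g y - g y₀) = (f' x - f' x₀) ⬝ᵥ (g' y - g' y₀) := by
  rw [sub_dotProduct, sub_dotProduct, dotProduct_sub_eq_of_softmax_eq heq,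
    dotProduct_sub_eq_of_softmax_eq heq]

end Softmax

namespace Matrix

variable {n R K : Type*} [Fintype n] [DecidableEq n] [CommRing R] [Field K]

theorem isUnit_of_mul_eq_mul {N L N' L' : Matrix n n R} (hN : IsUnit N) (hL : IsUnit L)
    (h : N * L = N' * L') : IsUnit L' := by
  rw [isUnit_iff_isUnit_det] at hN hL ⊢
  have hdet : IsUnit (N' * L').det := by rw [← h, det_mul]; exact hN.mul hL
  rw [det_mul] at hdet
  exact isUnit_of_mul_isUnit_right hdet

theorem eq_mul_inv_mulVec_of_mul_eq_mul {N L N' L' : Matrix n n K} (hN : IsUnit N)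
    (hL : IsUnit L) (h : N * L = N' * L') {u v : n → K} (huv : N *ᵥ u = N' *ᵥ v) :
    u = (L * L'⁻¹) *ᵥ v := by
  have hL' : IsUnit L'.det := (isUnit_iff_isUnit_det _).mp (isUnit_of_mul_eq_mul hN hL h)
  refine mulVec_injective_iff_isUnit.mpr hN ?_
  rw [huv, mulVec_mulVec, ← Matrix.mul_assoc, h, Matrix.mul_assoc, mul_nonsing_inv _ hL',
    Matrix.mul_one]

theorem transpose_inv_mul_transpose_transpose_inv {L L' : Matrix n n R} (hL : IsUnit L) :
    ((Lᵀ⁻¹ * L'ᵀ)ᵀ)⁻¹ = L * L'⁻¹ := by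
  rw [transpose_mul, transpose_transpose, ← transpose_nonsing_inv, transpose_transpose,
    mul_inv_rev, nonsing_inv_nonsing_inv _ ((isUnit_iff_isUnit_det _).mp hL)]

end Matrix

/-- Linear identifiability of softmax models under the diversity condition. -/
theorem unembedding_affine_identifiability {X Y : Type*} [Fintype Y] {M : ℕ}
    (f f' : X → Fin M → ℝ) (g g' : Y → Fin M → ℝ)
    (y₀ : Y) (ys : Fin M → Y) (x₀ : X) (xs : Fin M → X)
    (hdivg : LinearIndependent ℝ (fun i => g (ys i) - g y₀))
    (hdivf : LinearIndependent ℝ (fun i => f (xs i) - f x₀))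
    (heq : ∀ x y, softmax f g x y = softmax f' g' x y)
    (L L' A : Matrix (Fin M) (Fin M) ℝ)
    (hL : ∀ i j, L i j = g (ys j) i - g y₀ i)
    (hL' : ∀ i j, L' i j = g' (ys j) i - g' y₀ i)
    (hA : A = (Lᵀ)⁻¹ * L'ᵀ) :
    ∃ b : Fin M → ℝ, ∀ y, g y = (Aᵀ)⁻¹.mulVec (g' y) + b := by
  set N : Matrix (Fin M) (Fin M) ℝ := of fun j => f (xs j) - f x₀
  set N' : Matrix (Fin M) (Fin M) ℝ := of fun j => f' (xs j) - f' x₀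
  have hdisp := sub_dotProduct_sub_eq_of_softmax_eq heq
  have hNunit : IsUnit N := linearIndependent_rows_iff_isUnit.mp hdivf
  have hLunit : IsUnit L := by
    have hLT : Lᵀ = of fun j => g (ys j) - g y₀ := by ext j i; exact hL i j
    rw [← isUnit_transpose, hLT]
    exact linearIndependent_rows_iff_isUnit.mp hdivg
  have hNL : N * L = N' * L' := by
    ext j k
    simp only [mul_apply, hL, hL']
    exact hdisp (xs j) x₀ (ys k) y₀
  refine ⟨g y₀ - (Aᵀ)⁻¹ *ᵥ g' y₀, fun y => ?_⟩
  have hy : g y - g y₀ = (Aᵀ)⁻¹ *ᵥ (g' y - g' y₀) := by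
    rw [hA, transpose_inv_mul_transpose_transpose_inv hLunit]
    exact eq_mul_inv_mulVec_of_mul_eq_mul hNunit hLunit hNL
      (funext fun j => hdisp (xs j) x₀ y y₀)
  rw [mulVec_sub] at hy
  rw [← sub_add_cancel (g y) (g y₀), hy]
  abel
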